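/- arXiv:2109.08859 — 2 statements merged into one kernel-verified Lean document; each statement's English description precedes it below -/
import Mathlib

section
/- Let n ≥ 1, p, q ∈ (0,∞], and let φ be a Schwartz function on ℝⁿ with |φ(x)| ≥ 1 for all x ∈ Q. For ξ₀ ∈ ℝⁿ and 0 < ε < 1, set f_ε(x) = e^{2πi ξ₀·x} φ(εx). Then there exists a constant c ∈ (0,∞), depending only on n, p, q, and φ (in particular independent of ξ₀ and ε), such that c⁻¹ ε^{−n/q} ≤ ‖f_ε‖_{(L^p,ℓ^q)} ≤ c ε^{−n/q} for all 0 < ε < 1. -/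
/-!
Since `|f_ε(x)| = |φ(εx)|`, the Schwartz decay of `φ` bounds `f_ε` on the cube `k + Q` by
`C_N ∏ᵢ (1 + ε|kᵢ|)^{-N}`. For `Nq ≥ 2` the `q`-th powers of these bounds are dominated by
`C ∏ᵢ (1 + ε|kᵢ|)^{-2}`, whose sum over `ℤⁿ` factors into `n` one-dimensional sums
`∑ₘ (1 + ε|m|)^{-2} ≤ 4/ε`; this gives the upper bound. Conversely `|f_ε| ≥ 1` on every cube
`k + Q` with `ε(k + Q) ⊆ Q`, and there are at least `(4ε)^{-n}` of them.
-/

open MeasureTheory Real Set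
open scoped ENNReal NNReal

noncomputable section

namespace LatticeBump

/-- ℝⁿ as a Euclidean space. -/
abbrev En (n : ℕ) := EuclideanSpace ℝ (Fin n)

/-- ℤⁿ. -/
abbrev Zn (n : ℕ) := Fin n → ℤ

/-- The lattice point `k ∈ ℤⁿ` viewed as a point of ℝⁿ. -/
def intVec {n : ℕ} (k : Zn n) : En n := WithLp.toLp 2 (fun i => (k i : ℝ))

/-- `e^{2πit}`. -/
def e2πi (t : ℝ) : ℂ := Complex.exp (2 * Real.pi * t * Complex.I)

/-- The dot product on ℝⁿ. -/
def dotE {n : ℕ} (x ξ : En n) : ℝ := ∑ i, x i * ξ i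

/-- Fourier transform `f̂(ξ) = ∫ f(x) e^{-2πi x·ξ} dx`. -/
def FT {n : ℕ} (f : En n → ℂ) (ξ : En n) : ℂ := ∫ x, e2πi (-(dotE x ξ)) * f x

/-- Inverse Fourier transform. -/
def invFT {n : ℕ} (f : En n → ℂ) (x : En n) : ℂ := ∫ ξ, e2πi (dotE x ξ) * f ξ

/-- The bilinear Fourier multiplier operator `T_σ`. -/
def Tbil {n : ℕ} (σ : En n × En n → ℂ) (f₁ f₂ : En n → ℂ) (x : En n) : ℂ :=
  ∫ ξ : En n × En n, e2πi (dotE x (ξ.1 + ξ.2)) * σ ξ * FT f₁ ξ.1 * FT f₂ ξ.2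

/-- The lattice bump multiplier `σ_{a,Φ}`. -/
def latticeSymbol {n : ℕ} (a : Zn n × Zn n → ℂ) (Φ : En n × En n → ℂ)
    (ξ : En n × En n) : ℂ :=
  ∑' μ : Zn n × Zn n, a μ * Φ (ξ.1 - intVec μ.1, ξ.2 - intVec μ.2)

/-- ℓ^q norm (`q ∈ (0,∞]`) of an ℝ≥0∞-valued family. -/
def lqNorm {ι : Type*} (q : ℝ≥0∞) (u : ι → ℝ≥0∞) : ℝ≥0∞ :=
  if q = ∞ then ⨆ i, u i else (∑' i, u i ^ q.toReal) ^ (1 / q.toReal)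

/-- L^p norm (`p ∈ (0,∞]`) of an ℝ≥0∞-valued function. -/
def LpNormE {α : Type*} [MeasurableSpace α] (p : ℝ≥0∞) (μ : Measure α)
    (u : α → ℝ≥0∞) : ℝ≥0∞ :=
  if p = ∞ then essSup u μ else (∫⁻ x, u x ^ p.toReal ∂μ) ^ (1 / p.toReal)

/-- The unit cube `Q = (-1/2, 1/2]ⁿ`. -/
def unitCube (n : ℕ) : Set (En n) := {x | ∀ i, x i ∈ Set.Ioc (-(1:ℝ)/2) (1/2)}

/-- The shifted cube `k + Q`. -/
def shiftedCube {n : ℕ} (k : Zn n) : Set (En n) :=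
  {x | ∀ i, x i - (k i : ℝ) ∈ Set.Ioc (-(1:ℝ)/2) (1/2)}

/-- The amalgam space quasi-norm `‖f‖_{(L^p, ℓ^q)}`. -/
def amalgamNorm {n : ℕ} (p q : ℝ≥0∞) (f : En n → ℂ) : ℝ≥0∞ :=
  lqNorm q (fun k : Zn n => eLpNorm f p (volume.restrict (shiftedCube k)))

/-- Operator quasi-norm of `T_σ` between amalgam spaces (∞ if unbounded). -/
def amalgamOpNorm {n : ℕ} (σ : En n × En n → ℂ) (p₁ p₂ p q₁ q₂ q : ℝ≥0∞) : ℝ≥0∞ :=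
  sInf {C : ℝ≥0∞ | ∀ f₁ f₂ : SchwartzMap (En n) ℂ,
    amalgamNorm p q (Tbil σ ⇑f₁ ⇑f₂) ≤ C * amalgamNorm p₁ q₁ ⇑f₁ * amalgamNorm p₂ q₂ ⇑f₂}

/-- A smooth function on the torus 𝕋ⁿ, identified with a smooth 1-periodic function on ℝⁿ. -/
def IsSmoothPeriodic {n : ℕ} (F : En n → ℂ) : Prop :=
  ContDiff ℝ (⊤ : ℕ∞) F ∧ ∀ (x : En n) (k : Zn n), F (x + intVec k) = F x

/-- Fourier coefficient of a periodic function. -/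
def perCoeff {n : ℕ} (F : En n → ℂ) (μ : Zn n) : ℂ :=
  ∫ x in unitCube n, e2πi (-(dotE (intVec μ) x)) * F x

/-- The periodic bilinear Fourier multiplier operator `T^per_a`. -/
def Tper {n : ℕ} (a : Zn n × Zn n → ℂ) (F₁ F₂ : En n → ℂ) (x : En n) : ℂ :=
  ∑' μ : Zn n × Zn n,
    e2πi (dotE x (intVec μ.1 + intVec μ.2)) * a μ * perCoeff F₁ μ.1 * perCoeff F₂ μ.2

/-- `L^p(𝕋ⁿ)` quasi-norm (over the fundamental domain Q). -/
def perLp {n : ℕ} (p : ℝ≥0∞) (F : En n → ℂ) : ℝ≥0∞ :=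
  eLpNorm F p (volume.restrict (unitCube n))

/-- `‖T^per_a‖_{L^{p₁}×L^{p₂}→L^p}`. -/
def perOpNorm {n : ℕ} (a : Zn n × Zn n → ℂ) (p₁ p₂ p : ℝ≥0∞) : ℝ≥0∞ :=
  ⨆ (F₁ : {F : En n → ℂ // IsSmoothPeriodic F ∧ F ≠ 0})
    (F₂ : {F : En n → ℂ // IsSmoothPeriodic F ∧ F ≠ 0}),
      perLp p (Tper a F₁.1 F₂.1) / (perLp p₁ F₁.1 * perLp p₂ F₂.1)

/-- Condition (B). -/
def CondB {n : ℕ} (Φ : En n × En n → ℂ) : Prop :=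
  ∃ ξ0 : En n × En n, Φ ξ0 ≠ 0 ∧
    ∀ μ : Zn n × Zn n, μ ≠ 0 →
      ξ0 ∉ tsupport (fun ξ : En n × En n => Φ (ξ.1 - intVec μ.1, ξ.2 - intVec μ.2))

/-- `a ∈ ℓ^∞`. -/
def BddSeq {ι : Type*} (a : ι → ℂ) : Prop := ∃ M : ℝ, ∀ i, ‖a i‖ ≤ M

/-- The Fourier multiplier operator `m(D)` realized as convolution with `𝓕⁻¹m`. -/
def mulOp {n : ℕ} (m : En n → ℂ) (g : En n → ℂ) (x : En n) : ℂ :=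
  ∫ y, invFT m (x - y) * g y

/-- The Wiener amalgam quasi-norm `‖g‖_{W^{p,q}}` associated with the window `κ`. -/
def wienerNorm {n : ℕ} (κ : En n → ℂ) (p q : ℝ≥0∞) (g : En n → ℂ) : ℝ≥0∞ :=
  LpNormE p volume (fun x =>
    lqNorm q (fun k : Zn n => (‖mulOp (fun ξ => κ (ξ - intVec k)) g x‖₊ : ℝ≥0∞)))

/-- An admissible window for Wiener amalgam spaces:
`κ ∈ C_0^∞` with `|∑_k κ(ξ-k)| ≥ 1`. -/
def AdmissibleWindow {n : ℕ} (κ : En n → ℂ) : Prop :=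
  ContDiff ℝ (⊤ : ℕ∞) κ ∧ HasCompactSupport κ ∧
    ∀ ξ : En n, 1 ≤ ‖∑' k : Zn n, κ (ξ - intVec k)‖

/-- Operator quasi-norm of `T_σ` between Wiener amalgam spaces. -/
def wienerOpNorm {n : ℕ} (κ : En n → ℂ) (σ : En n × En n → ℂ)
    (p₁ p₂ p q₁ q₂ q : ℝ≥0∞) : ℝ≥0∞ :=
  sInf {C : ℝ≥0∞ | ∀ f₁ f₂ : SchwartzMap (En n) ℂ,
    wienerNorm κ p q (Tbil σ ⇑f₁ ⇑f₂)
      ≤ C * wienerNorm κ p₁ q₁ ⇑f₁ * wienerNorm κ p₂ q₂ ⇑f₂}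

/-- The discrete bilinear operator `S_a`. -/
def Sa {n : ℕ} (a : Zn n × Zn n → ℂ) (b₁ b₂ : Zn n → ℂ) (μ : Zn n) : ℂ :=
  ∑' ν : Zn n, a (ν, μ - ν) * b₁ ν * b₂ (μ - ν)

/-- ℓ^q quasi-norm of a complex sequence on ℤⁿ. -/
def seqLq {n : ℕ} (q : ℝ≥0∞) (b : Zn n → ℂ) : ℝ≥0∞ :=
  lqNorm q (fun μ => (‖b μ‖₊ : ℝ≥0∞))

/-- `‖S_a‖_{ℓ^{q₁}×ℓ^{q₂}→ℓ^q}`: supremum over nonzero finitely supported sequences. -/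
def SaOpNorm {n : ℕ} (a : Zn n × Zn n → ℂ) (q₁ q₂ q : ℝ≥0∞) : ℝ≥0∞ :=
  ⨆ (b₁ : {b : Zn n → ℂ // (Function.support b).Finite ∧ b ≠ 0})
    (b₂ : {b : Zn n → ℂ // (Function.support b).Finite ∧ b ≠ 0}),
      seqLq q (Sa a b₁.1 b₂.1) / (seqLq q₁ b₁.1 * seqLq q₂ b₂.1)

section LatticeSums

variable {n : ℕ} {ε : ℝ}

lemma sum_range_inv_one_add_mul_succ_sq_le (hε : 0 < ε) (M : ℕ) :
    ∑ a ∈ Finset.range M, ((1 + ε * (a + 1)) ^ 2)⁻¹ ≤ ε⁻¹ := by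
  set g : ℕ → ℝ := fun a => (1 + ε * a)⁻¹
  have telescope : ∀ a : ℕ, ((1 + ε * (a + 1)) ^ 2)⁻¹ ≤ ε⁻¹ * (g a - g (a + 1)) := by
    intro a
    have ha : (0 : ℝ) < 1 + ε * a := by positivity
    have hb : (0 : ℝ) < 1 + ε * (a + 1) := by positivity
    simp only [g, Nat.cast_succ]
    rw [inv_sub_inv ha.ne' hb.ne', show 1 + ε * (a + 1) - (1 + ε * a) = ε by ring,
      ← div_eq_inv_mul, div_div_cancel_left' hε.ne']
    exact inv_anti₀ (by positivity) (by nlinarith)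
  calc ∑ a ∈ Finset.range M, ((1 + ε * (a + 1)) ^ 2)⁻¹
      ≤ ∑ a ∈ Finset.range M, ε⁻¹ * (g a - g (a + 1)) := Finset.sum_le_sum fun a _ => telescope a
    _ = ε⁻¹ * (1 - g M) := by rw [← Finset.mul_sum, Finset.sum_range_sub']; simp [g]
    _ ≤ ε⁻¹ := mul_le_of_le_one_right (by positivity) (by simp [g]; positivity)

lemma tsum_nat_ofReal_inv_one_add_mul_sq_le (hε : 0 < ε) :
    ∑' a : ℕ, ENNReal.ofReal (((1 + ε * a) ^ 2)⁻¹) ≤ ENNReal.ofReal (1 + ε⁻¹) := by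
  refine ENNReal.tsum_le_of_sum_range_le fun M => ?_
  calc ∑ a ∈ Finset.range M, ENNReal.ofReal (((1 + ε * a) ^ 2)⁻¹)
      ≤ ∑ a ∈ Finset.range (M + 1), ENNReal.ofReal (((1 + ε * a) ^ 2)⁻¹) :=
        Finset.sum_le_sum_of_subset (Finset.range_subset_range.2 M.le_succ)
    _ = ENNReal.ofReal (1 + ∑ a ∈ Finset.range M, ((1 + ε * (a + 1)) ^ 2)⁻¹) := by
        rw [Finset.sum_range_succ', ← ENNReal.ofReal_sum_of_nonneg fun a _ => by positivity,
          ← ENNReal.ofReal_add (by positivity) (by positivity), add_comm]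
        push_cast; simp
    _ ≤ ENNReal.ofReal (1 + ε⁻¹) := by
        gcongr; exact sum_range_inv_one_add_mul_succ_sq_le hε M

lemma tsum_int_ofReal_inv_one_add_mul_abs_sq_le (hε : 0 < ε) (hε1 : ε ≤ 1) :
    ∑' m : ℤ, ENNReal.ofReal (((1 + ε * |(m : ℝ)|) ^ 2)⁻¹) ≤ ENNReal.ofReal (4 / ε) := by
  set g : ℕ → ℝ≥0∞ := fun a => ENNReal.ofReal (((1 + ε * a) ^ 2)⁻¹)
  have g_succ_le : ∀ a : ℕ, g (a + 1) ≤ g a := fun a => by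
    simp only [g]; gcongr; linarith
  rw [tsum_of_nat_of_neg_add_one ENNReal.summable ENNReal.summable]
  calc _ = ∑' a, g a + ∑' a, g (a + 1) := by
        congr 1 <;> refine tsum_congr fun a => ?_ <;> simp only [g]
        · rw [Int.cast_natCast, abs_of_nonneg (by positivity)]
        · push_cast
          rw [abs_neg, abs_of_nonneg (by positivity)]
    _ ≤ ENNReal.ofReal (1 + ε⁻¹) + ENNReal.ofReal (1 + ε⁻¹) := by
        have h := tsum_nat_ofReal_inv_one_add_mul_sq_le hε
        exact add_le_add h ((ENNReal.tsum_le_tsum g_succ_le).trans h)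
    _ ≤ ENNReal.ofReal (4 / ε) := by
        rw [← ENNReal.ofReal_add (by positivity) (by positivity)]
        gcongr
        rw [div_eq_mul_inv]
        nlinarith [one_le_inv_iff₀.2 ⟨hε, hε1⟩]

lemma tsum_pi_prod_eq_pow {α : Type*} (g : α → ℝ≥0∞) (m : ℕ) :
    ∑' k : Fin m → α, ∏ i, g (k i) = (∑' a, g a) ^ m := by
  induction m with
  | zero => simp
  | succ m ih =>
    rw [← (Fin.consEquiv fun _ : Fin (m + 1) => α).tsum_eq]
    simp only [Fin.consEquiv_apply, Fin.prod_univ_succ, Fin.cons_zero, Fin.cons_succ]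
    rw [ENNReal.tsum_prod', pow_succ']
    simp_rw [ENNReal.tsum_mul_left, ih, ENNReal.tsum_mul_right]

def decayWeight (ε : ℝ) (k : Zn n) : ℝ := ∏ i, (1 + ε * |(k i : ℝ)|)⁻¹

lemma decayWeight_pos (hε : 0 ≤ ε) (k : Zn n) : 0 < decayWeight ε k :=
  Finset.prod_pos fun _ _ => by positivity

lemma decayWeight_le_one (hε : 0 ≤ ε) (k : Zn n) : decayWeight ε k ≤ 1 :=
  Finset.prod_le_one (fun _ _ => by positivity) fun _ _ =>
    inv_le_one_of_one_le₀ (le_add_of_nonneg_right (by positivity))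

lemma tsum_ofReal_decayWeight_sq_le (hε : 0 < ε) (hε1 : ε ≤ 1) :
    ∑' k : Zn n, ENNReal.ofReal (decayWeight ε k ^ 2) ≤ ENNReal.ofReal (4 / ε) ^ n := by
  calc ∑' k : Zn n, ENNReal.ofReal (decayWeight ε k ^ 2)
      = ∑' k : Zn n, ∏ i, ENNReal.ofReal (((1 + ε * |(k i : ℝ)|) ^ 2)⁻¹) := by
        refine tsum_congr fun k => ?_
        rw [decayWeight, ← Finset.prod_pow, ENNReal.ofReal_prod_of_nonneg fun _ _ => by positivity]
        simp_rw [inv_pow]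
    _ = (∑' m : ℤ, ENNReal.ofReal (((1 + ε * |(m : ℝ)|) ^ 2)⁻¹)) ^ n :=
        tsum_pi_prod_eq_pow (fun m : ℤ => ENNReal.ofReal (((1 + ε * |(m : ℝ)|) ^ 2)⁻¹)) n
    _ ≤ ENNReal.ofReal (4 / ε) ^ n := by
        gcongr; exact tsum_int_ofReal_inv_one_add_mul_abs_sq_le hε hε1

end LatticeSums

section ProbabilityMeasure

variable {α E : Type*} [MeasurableSpace α] [NormedAddCommGroup E] {μ : Measure α}
  [IsProbabilityMeasure μ] {f : α → E} {p : ℝ≥0∞}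

lemma eLpNorm_le_ofReal_of_ae_norm_le {C : ℝ} (h : ∀ᵐ x ∂μ, ‖f x‖ ≤ C) :
    eLpNorm f p μ ≤ ENNReal.ofReal C := by
  simpa using eLpNorm_le_of_ae_bound (p := p) h

lemma one_le_eLpNorm_of_ae_one_le_norm (hp : p ≠ 0) (h : ∀ᵐ x ∂μ, 1 ≤ ‖f x‖) :
    1 ≤ eLpNorm f p μ := by
  have const_le : eLpNorm (fun _ => (1 : ℝ)) p μ ≤ eLpNorm f p μ :=
    eLpNorm_mono_ae (by simpa using h)
  simpa [eLpNorm_const _ hp (IsProbabilityMeasure.ne_zero μ)] using const_le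

end ProbabilityMeasure

lemma exists_norm_mul_prod_one_add_abs_pow_le {ι F : Type*} [Fintype ι] [NormedAddCommGroup F]
    [NormedSpace ℝ F] (φ : SchwartzMap (EuclideanSpace ℝ ι) F) (N : ℕ) :
    ∃ C : ℝ, 1 ≤ C ∧ ∀ y, ‖φ y‖ * ∏ i, (1 + |y i|) ^ N ≤ C := by
  set m : ℕ := Fintype.card ι * N
  refine ⟨max 1 (2 ^ m * (Finset.Iic (m, 0)).sup (fun mk => SchwartzMap.seminorm ℝ mk.1 mk.2) φ),
    le_max_left _ _, fun y => ?_⟩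
  have decay := SchwartzMap.one_add_le_sup_seminorm_apply (𝕜 := ℝ) (m := (m, 0)) le_rfl le_rfl φ y
  rw [norm_iteratedFDeriv_zero] at decay
  have prod_le : ∏ i, (1 + |y i|) ^ N ≤ (1 + ‖y‖) ^ m := by
    calc ∏ i, (1 + |y i|) ^ N ≤ ∏ _i : ι, (1 + ‖y‖) ^ N :=
          Finset.prod_le_prod (fun i _ => by positivity) fun i _ => by
            gcongr; exact PiLp.norm_apply_le y i
      _ = (1 + ‖y‖) ^ m := by rw [Finset.prod_const, Finset.card_univ, ← pow_mul, mul_comm]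
  calc ‖φ y‖ * ∏ i, (1 + |y i|) ^ N ≤ (1 + ‖y‖) ^ m * ‖φ y‖ := by
        rw [mul_comm]; gcongr
    _ ≤ _ := decay.trans (le_max_right _ _)

section Cubes

variable {n : ℕ} {ε : ℝ}

lemma norm_e2πi (t : ℝ) : ‖e2πi t‖ = 1 := by
  simp [e2πi, Complex.norm_exp]

lemma shiftedCube_eq_preimage (k : Zn n) :
    shiftedCube k = (MeasurableEquiv.toLp 2 (Fin n → ℝ)).symm ⁻¹'
      univ.pi fun i => Ioc ((k i : ℝ) - 1 / 2) ((k i : ℝ) + 1 / 2) := by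
  ext x
  simp only [shiftedCube, mem_ofPred_eq, mem_preimage, MeasurableEquiv.coe_toLp_symm, mem_univ_pi,
    mem_Ioc]
  refine forall_congr' fun i => ?_
  constructor <;> rintro ⟨h₁, h₂⟩ <;> constructor <;> linarith

lemma measurableSet_shiftedCube (k : Zn n) : MeasurableSet (shiftedCube k) := by
  rw [shiftedCube_eq_preimage]
  exact (MeasurableEquiv.toLp 2 (Fin n → ℝ)).symm.measurable
    (MeasurableSet.univ_pi fun _ => measurableSet_Ioc)

lemma volume_shiftedCube (k : Zn n) : volume (shiftedCube k) = 1 := by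
  rw [shiftedCube_eq_preimage,
    (EuclideanSpace.volume_preserving_symm_measurableEquiv_toLp (Fin n)).measure_preimage
      (MeasurableSet.univ_pi fun _ => measurableSet_Ioc).nullMeasurableSet,
    volume_pi_pi]
  norm_num [Real.volume_Ioc]

instance (k : Zn n) : IsProbabilityMeasure (volume.restrict (shiftedCube k)) :=
  ⟨by rw [Measure.restrict_apply_univ, volume_shiftedCube]⟩

lemma one_add_mul_abs_le_of_mem_shiftedCube (hε : 0 ≤ ε) (hε1 : ε ≤ 1) {k : Zn n}
    {x : En n} (hx : x ∈ shiftedCube k) (i : Fin n) :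
    1 + ε * |(k i : ℝ)| ≤ 2 * (1 + |(ε • x) i|) := by
  have hki : |(k i : ℝ)| ≤ |x i| + 1 / 2 := by
    obtain ⟨hlo, hhi⟩ := hx i
    have h : |x i - k i| ≤ 1 / 2 := abs_le.2 ⟨by linarith, hhi⟩
    linarith [abs_sub_abs_le_abs_sub (k i : ℝ) (x i), abs_sub_comm (k i : ℝ) (x i)]
  rw [PiLp.smul_apply, smul_eq_mul, abs_mul, abs_of_nonneg hε]
  nlinarith [abs_nonneg (x i)]

lemma smul_mem_unitCube_of_mem_shiftedCube (hε : 0 < ε) {k : Zn n}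
    (hk : ∀ i, (2 * |(k i : ℝ)| + 1) * ε ≤ 1) {x : En n} (hx : x ∈ shiftedCube k) :
    ε • x ∈ unitCube n := by
  intro i
  obtain ⟨hlo, hhi⟩ := hx i
  rw [PiLp.smul_apply, smul_eq_mul]
  constructor <;> nlinarith [hk i, neg_abs_le (k i : ℝ), le_abs_self (k i : ℝ)]

end Cubes

section ModulatedDilate

variable {n : ℕ} {ε : ℝ} (φ : SchwartzMap (En n) ℂ) (ξ₀ : En n) {p : ℝ≥0∞}

def modulatedDilate (ε : ℝ) : En n → ℂ := fun x => e2πi (dotE ξ₀ x) * φ (ε • x)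

lemma norm_modulatedDilate (x : En n) : ‖modulatedDilate φ ξ₀ ε x‖ = ‖φ (ε • x)‖ := by
  rw [modulatedDilate, norm_mul, norm_e2πi, one_mul]

lemma eLpNorm_modulatedDilate_le (hε : 0 ≤ ε) (hε1 : ε ≤ 1) {N : ℕ} {C : ℝ}
    (hC : ∀ y, ‖φ y‖ * ∏ i, (1 + |y i|) ^ N ≤ C) (k : Zn n) :
    eLpNorm (modulatedDilate φ ξ₀ ε) p (volume.restrict (shiftedCube k))
      ≤ ENNReal.ofReal (2 ^ (n * N) * C * decayWeight ε k ^ N) := by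
  refine eLpNorm_le_ofReal_of_ae_norm_le
    (ae_restrict_of_forall_mem (measurableSet_shiftedCube k) fun x hx => ?_)
  have weight_le : ∏ i, (1 + ε * |(k i : ℝ)|) ^ N ≤ 2 ^ (n * N) * ∏ i, (1 + |(ε • x) i|) ^ N := by
    calc ∏ i, (1 + ε * |(k i : ℝ)|) ^ N ≤ ∏ i, (2 * (1 + |(ε • x) i|)) ^ N :=
          Finset.prod_le_prod (fun _ _ => by positivity) fun i _ => by
            gcongr; exact one_add_mul_abs_le_of_mem_shiftedCube hε hε1 hx i
      _ = 2 ^ (n * N) * ∏ i, (1 + |(ε • x) i|) ^ N := by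
        rw [Finset.prod_congr rfl fun _ _ => mul_pow _ _ _, Finset.prod_mul_distrib,
          Finset.prod_const, Finset.card_univ, Fintype.card_fin, ← pow_mul, mul_comm N n]
  have hW : decayWeight ε k ^ N = (∏ i, (1 + ε * |(k i : ℝ)|) ^ N)⁻¹ := by
    rw [decayWeight, ← Finset.prod_pow, ← Finset.prod_inv_distrib]; simp_rw [inv_pow]
  rw [norm_modulatedDilate, hW, ← div_eq_mul_inv, le_div_iff₀ (by positivity)]
  calc ‖φ (ε • x)‖ * ∏ i, (1 + ε * |(k i : ℝ)|) ^ N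
      ≤ ‖φ (ε • x)‖ * (2 ^ (n * N) * ∏ i, (1 + |(ε • x) i|) ^ N) := by gcongr
    _ ≤ 2 ^ (n * N) * C := by
        rw [mul_left_comm]; exact mul_le_mul_of_nonneg_left (hC _) (by positivity)

lemma one_le_eLpNorm_modulatedDilate (hp : p ≠ 0) (hφ : ∀ x ∈ unitCube n, 1 ≤ ‖φ x‖)
    (hε : 0 < ε) {k : Zn n} (hk : ∀ i, (2 * |(k i : ℝ)| + 1) * ε ≤ 1) :
    1 ≤ eLpNorm (modulatedDilate φ ξ₀ ε) p (volume.restrict (shiftedCube k)) :=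
  one_le_eLpNorm_of_ae_one_le_norm hp <|
    ae_restrict_of_forall_mem (measurableSet_shiftedCube k) fun x hx => by
      rw [norm_modulatedDilate]
      exact hφ _ (smul_mem_unitCube_of_mem_shiftedCube hε hk hx)

end ModulatedDilate

section LatticeNorms

variable {n : ℕ} {r : ℝ} {ε : ℝ} {u : Zn n → ℝ≥0∞}

lemma tsum_rpow_rpow_le_of_le_decayWeight_pow (hr : 0 < r) {N : ℕ} (hN : 2 ≤ N * r)
    (hε : 0 < ε) (hε1 : ε ≤ 1) {C : ℝ} (hC : 0 ≤ C)
    (hu : ∀ k, u k ≤ ENNReal.ofReal (C * decayWeight ε k ^ N)) :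
    (∑' k, u k ^ r) ^ (1 / r)
      ≤ ENNReal.ofReal (C * 4 ^ ((n : ℝ) / r)) * ENNReal.ofReal (ε ^ (-((n : ℝ) / r))) := by
  have term_le : ∀ k, u k ^ r ≤ ENNReal.ofReal C ^ r * ENNReal.ofReal (decayWeight ε k ^ 2) := by
    intro k
    have hW := decayWeight_pos hε.le k
    calc u k ^ r ≤ ENNReal.ofReal (C * decayWeight ε k ^ N) ^ r :=
          ENNReal.rpow_le_rpow (hu k) hr.le
      _ = ENNReal.ofReal C ^ r * ENNReal.ofReal (decayWeight ε k ^ ((N : ℝ) * r)) := by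
          rw [ENNReal.ofReal_mul hC, ENNReal.mul_rpow_of_nonneg _ _ hr.le,
            ENNReal.ofReal_rpow_of_nonneg (by positivity : 0 ≤ decayWeight ε k ^ N) hr.le,
            ← Real.rpow_natCast, ← Real.rpow_mul hW.le]
      _ ≤ ENNReal.ofReal C ^ r * ENNReal.ofReal (decayWeight ε k ^ 2) := by
          gcongr
          rw [← Real.rpow_two]
          exact Real.rpow_le_rpow_of_exponent_ge hW (decayWeight_le_one hε.le k) hN
  calc (∑' k, u k ^ r) ^ (1 / r)
      ≤ (ENNReal.ofReal C ^ r * ENNReal.ofReal (4 / ε) ^ n) ^ (1 / r) := by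
        gcongr
        calc ∑' k, u k ^ r
            ≤ ∑' k, ENNReal.ofReal C ^ r * ENNReal.ofReal (decayWeight ε k ^ 2) :=
              ENNReal.tsum_le_tsum term_le
          _ = ENNReal.ofReal C ^ r * ∑' k, ENNReal.ofReal (decayWeight ε k ^ 2) :=
              ENNReal.tsum_mul_left
          _ ≤ ENNReal.ofReal C ^ r * ENNReal.ofReal (4 / ε) ^ n := by
              gcongr; exact tsum_ofReal_decayWeight_sq_le hε hε1
    _ = ENNReal.ofReal C * ENNReal.ofReal ((4 / ε) ^ ((n : ℝ) / r)) := by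
        rw [ENNReal.mul_rpow_of_nonneg _ _ (by positivity), ← ENNReal.rpow_mul,
          mul_one_div_cancel hr.ne', ENNReal.rpow_one, ← ENNReal.rpow_natCast,
          ← ENNReal.rpow_mul, ENNReal.ofReal_rpow_of_pos (by positivity), mul_one_div]
    _ = ENNReal.ofReal (C * 4 ^ ((n : ℝ) / r)) * ENNReal.ofReal (ε ^ (-((n : ℝ) / r))) := by
        rw [← ENNReal.ofReal_mul hC, ← ENNReal.ofReal_mul (by positivity),
          Real.div_rpow (by norm_num) hε.le, Real.rpow_neg hε.le, div_eq_mul_inv, mul_assoc]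

lemma exists_box_radius (hε : 0 < ε) (hε1 : ε ≤ 1) :
    ∃ M : ℕ, (4 * ε)⁻¹ ≤ 2 * M + 1 ∧ (2 * M + 1) * ε ≤ 1 := by
  refine ⟨⌊(ε⁻¹ - 1) / 2⌋₊, ?_, ?_⟩
  · have h_lt := Nat.lt_floor_add_one ((ε⁻¹ - 1) / 2)
    rcases le_or_gt ε (1 / 4) with hsmall | hlarge
    · have : 4 ≤ ε⁻¹ := by rw [le_inv_comm₀ (by norm_num) hε]; linarith
      rw [mul_inv]
      linarith
    · have : (4 * ε)⁻¹ < 1 := inv_lt_one_of_one_lt₀ (by linarith)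
      linarith [(Nat.cast_nonneg _ : (0 : ℝ) ≤ ⌊(ε⁻¹ - 1) / 2⌋₊)]
  · have h_le := Nat.floor_le (by
      rw [sub_div, sub_nonneg, div_le_div_iff_of_pos_right two_pos]; exact one_le_inv₀ hε |>.2 hε1 :
      (0 : ℝ) ≤ (ε⁻¹ - 1) / 2)
    calc (2 * (⌊(ε⁻¹ - 1) / 2⌋₊ : ℝ) + 1) * ε ≤ ε⁻¹ * ε := by gcongr; linarith
      _ = 1 := inv_mul_cancel₀ hε.ne'

lemma ofReal_rpow_le_tsum_rpow_rpow (hr : 0 < r) (hε : 0 < ε) (hε1 : ε ≤ 1)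
    (hu : ∀ k : Zn n, (∀ i, (2 * |(k i : ℝ)| + 1) * ε ≤ 1) → 1 ≤ u k) :
    ENNReal.ofReal ((4 * ε) ^ (-((n : ℝ) / r))) ≤ (∑' k, u k ^ r) ^ (1 / r) := by
  obtain ⟨M, hM_large, hM_fits⟩ := exists_box_radius hε hε1
  set box : Finset (Zn n) := Fintype.piFinset fun _ => Finset.Icc (-(M : ℤ)) M
  have card_box : box.card = (2 * M + 1) ^ n := by
    simp only [box, Fintype.card_piFinset, Int.card_Icc, Finset.prod_const, Finset.card_univ,
      Fintype.card_fin]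
    congr 1; omega
  have one_le_on_box : ∀ k ∈ box, 1 ≤ u k ^ r := fun k hk =>
    ENNReal.one_le_rpow (hu k fun i => by
      have hki := Finset.mem_Icc.1 (Fintype.mem_piFinset.1 hk i)
      have : |(k i : ℝ)| ≤ M := abs_le.2 ⟨by exact_mod_cast hki.1, by exact_mod_cast hki.2⟩
      nlinarith) hr
  calc ENNReal.ofReal ((4 * ε) ^ (-((n : ℝ) / r)))
      = ENNReal.ofReal ((4 * ε)⁻¹ ^ n) ^ (1 / r) := by
        rw [ENNReal.ofReal_rpow_of_nonneg (by positivity) (by positivity), ← Real.rpow_natCast,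
          ← Real.rpow_mul (by positivity), Real.inv_rpow (by positivity), ← Real.rpow_neg
          (by positivity), mul_one_div]
    _ ≤ (box.card : ℝ≥0∞) ^ (1 / r) := by
        gcongr
        rw [card_box, ← ENNReal.ofReal_natCast]
        gcongr
        push_cast
        gcongr
    _ ≤ (∑' k, u k ^ r) ^ (1 / r) := by
        gcongr
        calc (box.card : ℝ≥0∞) = ∑ _k ∈ box, 1 := by simp
          _ ≤ ∑ k ∈ box, u k ^ r := Finset.sum_le_sum one_le_on_box
          _ ≤ ∑' k, u k ^ r := ENNReal.sum_le_tsum box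

end LatticeNorms

section AmalgamNorm

variable {n : ℕ} (φ : SchwartzMap (En n) ℂ) (ξ₀ : En n) {p q : ℝ≥0∞} {ε : ℝ}

lemma amalgamNorm_top_modulatedDilate_le (hε : 0 ≤ ε) (hε1 : ε ≤ 1) {C : ℝ}
    (hC : ∀ y, ‖φ y‖ ≤ C) : amalgamNorm p ∞ (modulatedDilate φ ξ₀ ε) ≤ ENNReal.ofReal C :=
  iSup_le fun k => by
    simpa using eLpNorm_modulatedDilate_le φ ξ₀ hε hε1 (N := 0) (by simpa using hC) k

lemma one_le_amalgamNorm_top_modulatedDilate (hp : p ≠ 0) (hφ : ∀ x ∈ unitCube n, 1 ≤ ‖φ x‖)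
    (hε : 0 < ε) (hε1 : ε ≤ 1) : 1 ≤ amalgamNorm p ∞ (modulatedDilate φ ξ₀ ε) :=
  (one_le_eLpNorm_modulatedDilate φ ξ₀ hp hφ hε (k := 0) fun _ => by simpa using hε1).trans
    (le_iSup (fun k => eLpNorm _ p (volume.restrict (shiftedCube k))) 0)

lemma amalgamNorm_modulatedDilate_le (hq : 0 < q) (hq_top : q ≠ ∞) (hε : 0 < ε) (hε1 : ε ≤ 1)
    {N : ℕ} (hN : 2 ≤ N * q.toReal) {C : ℝ} (hC0 : 0 ≤ C)
    (hC : ∀ y, ‖φ y‖ * ∏ i, (1 + |y i|) ^ N ≤ C) :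
    amalgamNorm p q (modulatedDilate φ ξ₀ ε)
      ≤ ENNReal.ofReal (2 ^ (n * N) * C * 4 ^ ((n : ℝ) / q.toReal))
        * ENNReal.ofReal (ε ^ (-((n : ℝ) / q.toReal))) := by
  rw [amalgamNorm, lqNorm, if_neg hq_top]
  exact tsum_rpow_rpow_le_of_le_decayWeight_pow (ENNReal.toReal_pos hq.ne' hq_top) hN hε hε1
    (by positivity) fun k => eLpNorm_modulatedDilate_le φ ξ₀ hε.le hε1 hC k

lemma ofReal_rpow_le_amalgamNorm_modulatedDilate (hp : p ≠ 0) (hq : 0 < q) (hq_top : q ≠ ∞)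
    (hφ : ∀ x ∈ unitCube n, 1 ≤ ‖φ x‖) (hε : 0 < ε) (hε1 : ε ≤ 1) :
    ENNReal.ofReal ((4 * ε) ^ (-((n : ℝ) / q.toReal)))
      ≤ amalgamNorm p q (modulatedDilate φ ξ₀ ε) := by
  rw [amalgamNorm, lqNorm, if_neg hq_top]
  exact ofReal_rpow_le_tsum_rpow_rpow (ENNReal.toReal_pos hq.ne' hq_top) hε hε1 fun k hk =>
    one_le_eLpNorm_modulatedDilate φ ξ₀ hp hφ hε hk

end AmalgamNorm

/-- For `q = ∞` the exponent `-n / q.toReal` is `0`, since `(∞ : ℝ≥0∞).toReal = 0`. -/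
theorem statement15_general (n : ℕ) (p q : ℝ≥0∞) (hp : 0 < p) (hq : 0 < q)
    (φ : SchwartzMap (En n) ℂ) (hφ : ∀ x ∈ unitCube n, 1 ≤ ‖φ x‖) :
    ∃ c : ℝ≥0∞, 0 < c ∧ c < ∞ ∧
      ∀ (ξ₀ : En n) (ε : ℝ), 0 < ε → ε < 1 →
        c⁻¹ * ENNReal.ofReal (ε ^ (-((n : ℝ) / q.toReal)))
            ≤ amalgamNorm p q (fun x : En n => e2πi (dotE ξ₀ x) * φ (ε • x)) ∧
        amalgamNorm p q (fun x : En n => e2πi (dotE ξ₀ x) * φ (ε • x))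
            ≤ c * ENNReal.ofReal (ε ^ (-((n : ℝ) / q.toReal))) := by
  rcases eq_or_ne q ∞ with rfl | hq_top
  · obtain ⟨C, hC1, hC⟩ := exists_norm_mul_prod_one_add_abs_pow_le φ 0
    refine ⟨ENNReal.ofReal C, ENNReal.ofReal_pos.2 (by linarith), ENNReal.ofReal_lt_top,
      fun ξ₀ ε hε hε1 => ?_⟩
    simp only [ENNReal.toReal_top, div_zero, neg_zero, rpow_zero, ENNReal.ofReal_one, mul_one]
    exact ⟨(ENNReal.inv_le_one.2 (ENNReal.one_le_ofReal.2 hC1)).trans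
        (one_le_amalgamNorm_top_modulatedDilate φ ξ₀ hp.ne' hφ hε hε1.le),
      amalgamNorm_top_modulatedDilate_le φ ξ₀ hε.le hε1.le (by simpa using hC)⟩
  · set a : ℝ := (n : ℝ) / q.toReal
    have hr : 0 < q.toReal := ENNReal.toReal_pos hq.ne' hq_top
    obtain ⟨N, hN⟩ : ∃ N : ℕ, 2 / q.toReal ≤ N := exists_nat_ge _
    obtain ⟨C, hC1, hC⟩ := exists_norm_mul_prod_one_add_abs_pow_le φ N
    have hK : 1 ≤ 2 ^ (n * N) * C := one_le_mul_of_one_le_of_one_le (one_le_pow₀ one_le_two) hC1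
    refine ⟨ENNReal.ofReal (2 ^ (n * N) * C * 4 ^ a), ENNReal.ofReal_pos.2 (by positivity),
      ENNReal.ofReal_lt_top, fun ξ₀ ε hε hε1 => ⟨?_, ?_⟩⟩
    · calc (ENNReal.ofReal (2 ^ (n * N) * C * 4 ^ a))⁻¹ * ENNReal.ofReal (ε ^ (-a))
          ≤ ENNReal.ofReal ((4 * ε) ^ (-a)) := by
            rw [← ENNReal.ofReal_inv_of_pos (by positivity), ← ENNReal.ofReal_mul (by positivity),
              Real.mul_rpow (by norm_num) hε.le, Real.rpow_neg (by norm_num : (0 : ℝ) ≤ 4)]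
            gcongr
            exact le_mul_of_one_le_left (by positivity) hK
        _ ≤ _ := ofReal_rpow_le_amalgamNorm_modulatedDilate φ ξ₀ hp.ne' hq hq_top hφ hε hε1.le
    · exact amalgamNorm_modulatedDilate_le φ ξ₀ hq hq_top hε hε1.le ((div_le_iff₀ hr).1 hN)
        (by linarith) hC

/-- Amalgam norm of the modulated dilate `f_ε(x) = e^{2πi ξ₀·x} φ(εx)` is
comparable to `ε^{-n/q}` (when `q = ∞`, `ε^{-n/q} = 1`, as `q.toReal = 0`). -/
theorem statement15 (n : ℕ) (hn : 1 ≤ n) (p q : ℝ≥0∞) (hp : 0 < p) (hq : 0 < q)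
    (φ : SchwartzMap (En n) ℂ) (hφ : ∀ x ∈ unitCube n, 1 ≤ ‖φ x‖) :
    ∃ c : ℝ≥0∞, 0 < c ∧ c < ∞ ∧
      ∀ (ξ₀ : En n) (ε : ℝ), 0 < ε → ε < 1 →
        c⁻¹ * ENNReal.ofReal (ε ^ (-((n : ℝ) / q.toReal)))
            ≤ amalgamNorm p q (fun x : En n => e2πi (dotE ξ₀ x) * φ (ε • x)) ∧
        amalgamNorm p q (fun x : En n => e2πi (dotE ξ₀ x) * φ (ε • x))
            ≤ c * ENNReal.ofReal (ε ^ (-((n : ℝ) / q.toReal))) :=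
  statement15_general n p q hp hq φ hφ

end LatticeBump
end
end

section
/- Let n ≥ 1, p, q ∈ (0,∞], ξ⁰ ∈ ℝⁿ, and ε > 0. Let κ ∈ C_0^∞(ℝⁿ) satisfy: for all ξ with |ξ| < 2ε, κ(ξ) = 1 and κ(ξ−μ) = 0 for every μ ∈ ℤⁿ∖{0}. Let θ ∈ C_0^∞(ℝⁿ) with supp θ ⊂ {ξ : |ξ−ξ⁰| < ε}. Let b ∈ X(ℤⁿ) and define the Schwartz function f by f̂(ξ) = Σ_{ν∈ℤⁿ} b(ν) θ(ξ−ν). Then for every μ ∈ ℤⁿ, κ(D−ξ⁰−μ) f(x) = b(μ) e^{2πi μ·x} (𝓕⁻¹θ)(x), and consequently ‖ ‖κ(D−ξ⁰−μ) f(x)‖_{ℓ^q_μ(ℤⁿ)} ‖_{L^p_x(ℝⁿ)} = ‖b‖_{ℓ^q(ℤⁿ)} ‖𝓕⁻¹θ‖_{L^p(ℝⁿ)}. -/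
/-!
The function `f` is `𝓕⁻¹F` with `F(ξ) = ∑_ν b(ν) θ(ξ - ν)`, and `m(D)` acts on `𝓕⁻¹F` as
`𝓕⁻¹(m F)` (the convolution theorem). The bump `θ(· - ν)` lives in the `ε`-ball around `ξ⁰ + ν`,
where `κ(· - ξ⁰ - μ)` is `1` for `ν = μ` and `0` otherwise, so `κ(ξ - ξ⁰ - μ) F(ξ) = b(μ) θ(ξ - μ)`,
whose inverse transform is `b(μ) e^{2πiμ·x} 𝓕⁻¹θ(x)`. Pointwise in `x` the family over `μ` is then
`|b(μ)| |𝓕⁻¹θ(x)|`, and the norm identity follows from homogeneity of the `ℓ^q` and `L^p` norms.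
-/

open MeasureTheory Real Set
open scoped ENNReal NNReal

noncomputable section

namespace LatticeBump

open scoped FourierTransform SchwartzMap

section Fourier

variable {n : ℕ}

lemma e2πi_add (s t : ℝ) : e2πi (s + t) = e2πi s * e2πi t := by
  unfold e2πi; rw [← Complex.exp_add]; push_cast; ring_nf

lemma nnnorm_e2πi (t : ℝ) : ‖e2πi t‖₊ = 1 := by
  unfold e2πi
  simpa [mul_assoc] using Complex.nnnorm_exp_ofReal_mul_I (2 * π * t)

lemma dotE_eq_inner (x ξ : En n) : dotE x ξ = inner ℝ x ξ := by
  simp [dotE, PiLp.inner_apply, mul_comm]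

lemma dotE_comm (x ξ : En n) : dotE x ξ = dotE ξ x := by
  simp [dotE_eq_inner, real_inner_comm]

lemma invFT_eq_fourierInv (g : En n → ℂ) : invFT g = 𝓕⁻ g := by
  ext x
  rw [invFT, Real.fourierInv_eq']
  congr 1; ext ξ
  rw [smul_eq_mul, e2πi, dotE_eq_inner, real_inner_comm]
  push_cast; ring_nf

lemma integrable_e2πi_dotE_mul {g : En n → ℂ} (hg : Integrable g) (x : En n) :
    Integrable fun ξ => e2πi (dotE x ξ) * g ξ := by
  refine hg.bdd_mul (c := 1) ?_ (.of_forall fun ξ => (nnnorm_e2πi _).le)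
  simp_rw [dotE_eq_inner, e2πi]
  exact Continuous.aestronglyMeasurable (by fun_prop)

lemma invFT_finset_sum {ι : Type*} (s : Finset ι) {g : ι → En n → ℂ}
    (hg : ∀ i ∈ s, Integrable (g i)) (x : En n) :
    invFT (fun ξ => ∑ i ∈ s, g i ξ) x = ∑ i ∈ s, invFT (g i) x := by
  simp_rw [invFT, Finset.mul_sum]
  exact integral_finsetSum s fun i hi => integrable_e2πi_dotE_mul (hg i hi) x

lemma invFT_const_mul (c : ℂ) (g : En n → ℂ) (x : En n) :
    invFT (fun ξ => c * g ξ) x = c * invFT g x := by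
  simp_rw [invFT, mul_left_comm _ c, integral_const_mul]

lemma invFT_comp_sub (g : En n → ℂ) (v x : En n) :
    invFT (fun ξ => g (ξ - v)) x = e2πi (dotE x v) * invFT g x := by
  have hmod : ∀ ξ : En n, e2πi (dotE x ξ) * g (ξ - v)
      = e2πi (dotE x v) * (e2πi (dotE x (ξ - v)) * g (ξ - v)) := by
    intro ξ
    rw [← mul_assoc, ← e2πi_add, dotE_eq_inner, dotE_eq_inner, dotE_eq_inner, inner_sub_right,
      add_sub_cancel]
  simp_rw [invFT, hmod, integral_const_mul,
    integral_sub_right_eq_self (fun η => e2πi (dotE x η) * g η) v]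

lemma mulOp_invFT (m h : 𝓢(En n, ℂ)) :
    mulOp m (invFT h) = invFT (fun ξ => m ξ * h ξ) := by
  have hconv : SchwartzMap.convolution (ContinuousLinearMap.mul ℂ ℂ) (𝓕⁻ m) (𝓕⁻ h)
      = 𝓕⁻ (SchwartzMap.pairing (ContinuousLinearMap.mul ℂ ℂ) m h) := by
    rw [← FourierPair.fourierInv_fourier_eq (F := 𝓢(En n, ℂ))
      (SchwartzMap.convolution (ContinuousLinearMap.mul ℂ ℂ) (𝓕⁻ m) (𝓕⁻ h)),
      SchwartzMap.fourier_convolution, FourierTransform.fourier_fourierInv_eq,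
      FourierTransform.fourier_fourierInv_eq]
  ext x
  have hconv_x := congrArg (fun F : 𝓢(En n, ℂ) => F x) hconv
  simp only [SchwartzMap.convolution_apply, convolution_mul_swap, SchwartzMap.fourierInv_coe]
    at hconv_x
  simp only [mulOp, invFT_eq_fourierInv, hconv_x]
  rfl

lemma mulOp_invFT_of_hasCompactSupport {m h : En n → ℂ} (hmc : HasCompactSupport m)
    (hm : ContDiff ℝ (⊤ : ℕ∞) m) (hhc : HasCompactSupport h) (hh : ContDiff ℝ (⊤ : ℕ∞) h) :
    mulOp m (invFT h) = invFT (fun ξ => m ξ * h ξ) :=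
  mulOp_invFT (hmc.toSchwartzMap hm) (hhc.toSchwartzMap hh)

end Fourier

section Lattice

variable {n : ℕ}

lemma intVec_sub (μ ν : Zn n) : intVec (μ - ν) = intVec μ - intVec ν := by
  ext i
  simp [intVec]

def latticeSum (b : Zn n → ℂ) (θ : En n → ℂ) (ξ : En n) : ℂ := ∑' ν, b ν * θ (ξ - intVec ν)

lemma latticeSum_eq_sum {b : Zn n → ℂ} (hb : (Function.support b).Finite) (θ : En n → ℂ)
    (ξ : En n) : latticeSum b θ ξ = ∑ ν ∈ hb.toFinset, b ν * θ (ξ - intVec ν) :=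
  tsum_eq_sum fun ν hν => by simp_all

lemma contDiff_latticeSum {b : Zn n → ℂ} (hb : (Function.support b).Finite) {θ : En n → ℂ}
    (hθ : ContDiff ℝ (⊤ : ℕ∞) θ) : ContDiff ℝ (⊤ : ℕ∞) (latticeSum b θ) := by
  rw [funext (latticeSum_eq_sum hb θ)]
  exact ContDiff.sum fun ν _ => contDiff_const.mul (hθ.comp (contDiff_id.sub contDiff_const))

lemma hasCompactSupport_latticeSum {b : Zn n → ℂ} (hb : (Function.support b).Finite)
    {θ : En n → ℂ} (hθ : HasCompactSupport θ) : HasCompactSupport (latticeSum b θ) := by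
  rw [funext (latticeSum_eq_sum hb θ), ← Finset.sum_fn]
  refine Finset.sum_induction _ HasCompactSupport (fun _ _ => HasCompactSupport.add)
    HasCompactSupport.zero fun ν _ => HasCompactSupport.mul_left ?_
  exact hθ.comp_isClosedEmbedding (Homeomorph.subRight (intVec ν)).isClosedEmbedding

lemma invFT_latticeSum {b : Zn n → ℂ} (hb : (Function.support b).Finite) {θ : En n → ℂ}
    (hθ : Integrable θ) (x : En n) :
    invFT (latticeSum b θ) x = (∑' ν, b ν * e2πi (dotE (intVec ν) x)) * invFT θ x := by
  rw [funext (latticeSum_eq_sum hb θ), invFT_finset_sum, tsum_eq_sum (s := hb.toFinset)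
    fun ν hν => by simp_all, Finset.sum_mul]
  · refine Finset.sum_congr rfl fun ν _ => ?_
    rw [invFT_const_mul, invFT_comp_sub, dotE_comm, mul_assoc]
  · exact fun ν _ => (hθ.comp_sub_right (intVec ν)).const_mul (b ν)

variable {κ θ : En n → ℂ} {ξ0 : En n} {ε : ℝ}

lemma window_mul_shift (hκ1 : ∀ ξ : En n, ‖ξ‖ < 2 * ε → κ ξ = 1)
    (hκ0 : ∀ ξ : En n, ‖ξ‖ < 2 * ε → ∀ μ : Zn n, μ ≠ 0 → κ (ξ - intVec μ) = 0)
    (hθsupp : tsupport θ ⊆ {ξ : En n | ‖ξ - ξ0‖ < ε}) (μ ν : Zn n) (ξ : En n) :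
    κ (ξ - ξ0 - intVec μ) * θ (ξ - intVec ν) = if ν = μ then θ (ξ - intVec μ) else 0 := by
  by_cases hθ : θ (ξ - intVec ν) = 0
  · split_ifs with hνμ <;> simp_all
  have hnear : ‖ξ - intVec ν - ξ0‖ < ε := hθsupp (subset_tsupport θ hθ)
  have hnear2 : ‖ξ - intVec ν - ξ0‖ < 2 * ε := by linarith [norm_nonneg (ξ - intVec ν - ξ0)]
  split_ifs with hνμ
  · subst hνμ
    rw [sub_right_comm, hκ1 _ hnear2, one_mul]
  · have hκ := hκ0 _ hnear2 (μ - ν) (sub_ne_zero.mpr (Ne.symm hνμ))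
    rw [intVec_sub, show ξ - intVec ν - ξ0 - (intVec μ - intVec ν) = ξ - ξ0 - intVec μ by abel]
      at hκ
    rw [hκ, zero_mul]

lemma window_mul_latticeSum (hκ1 : ∀ ξ : En n, ‖ξ‖ < 2 * ε → κ ξ = 1)
    (hκ0 : ∀ ξ : En n, ‖ξ‖ < 2 * ε → ∀ μ : Zn n, μ ≠ 0 → κ (ξ - intVec μ) = 0)
    (hθsupp : tsupport θ ⊆ {ξ : En n | ‖ξ - ξ0‖ < ε}) (b : Zn n → ℂ) (μ : Zn n) (ξ : En n) :
    κ (ξ - ξ0 - intVec μ) * latticeSum b θ ξ = b μ * θ (ξ - intVec μ) := by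
  rw [latticeSum, ← tsum_mul_left]
  simp_rw [mul_left_comm _ (b _), window_mul_shift hκ1 hκ0 hθsupp, mul_ite, mul_zero]
  exact tsum_ite_eq μ _

end Lattice

section Norms

lemma lqNorm_mul_const {ι : Type*} {q : ℝ≥0∞} (hq : q ≠ 0) (u : ι → ℝ≥0∞) (c : ℝ≥0∞) :
    lqNorm q (fun i => u i * c) = lqNorm q u * c := by
  unfold lqNorm
  split_ifs with hq'
  · exact (ENNReal.iSup_mul u c).symm
  have hr : 0 < q.toReal := ENNReal.toReal_pos hq hq'
  simp_rw [ENNReal.mul_rpow_of_nonneg _ _ hr.le]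
  rw [ENNReal.tsum_mul_right, ENNReal.mul_rpow_of_nonneg _ _ (by positivity),
    ← ENNReal.rpow_mul, mul_one_div_cancel hr.ne', ENNReal.rpow_one]

lemma LpNormE_const_mul {α : Type*} [MeasurableSpace α] {p : ℝ≥0∞} (hp : p ≠ 0)
    (μ : Measure α) {c : ℝ≥0∞} (hc : c ≠ ∞) (u : α → ℝ≥0∞) :
    LpNormE p μ (fun x => c * u x) = c * LpNormE p μ u := by
  unfold LpNormE
  split_ifs with hp'
  · exact ENNReal.essSup_const_mul
  have hr : 0 < p.toReal := ENNReal.toReal_pos hp hp'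
  simp_rw [ENNReal.mul_rpow_of_nonneg _ _ hr.le]
  rw [lintegral_const_mul' _ _ (ENNReal.rpow_lt_top_of_nonneg hr.le hc).ne,
    ENNReal.mul_rpow_of_nonneg _ _ (by positivity), ← ENNReal.rpow_mul,
    mul_one_div_cancel hr.ne', ENNReal.rpow_one]

lemma LpNormE_nnnorm {α E : Type*} [MeasurableSpace α] [NormedAddCommGroup E] {p : ℝ≥0∞}
    (hp : p ≠ 0) (μ : Measure α) (g : α → E) :
    LpNormE p μ (fun x => ‖g x‖₊) = eLpNorm g p μ := by
  unfold LpNormE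
  split_ifs with hp'
  · rw [hp', eLpNorm_exponent_top]; rfl
  · rw [eLpNorm_eq_eLpNorm' hp hp', eLpNorm']; rfl

lemma lqNorm_ne_top {ι : Type*} {q : ℝ≥0∞} (hq : q ≠ 0) {u : ι → ℝ≥0∞} (hu : ∀ i, u i ≠ ∞)
    (hfin : (Function.support u).Finite) : lqNorm q u ≠ ∞ := by
  have hsum : ∑ i ∈ hfin.toFinset, u i ≠ ∞ := ENNReal.sum_ne_top.mpr fun i _ => hu i
  unfold lqNorm
  split_ifs with hq'
  · refine ne_top_of_le_ne_top hsum (iSup_le fun i => ?_)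
    by_cases hi : i ∈ hfin.toFinset
    · exact Finset.single_le_sum (f := u) (fun _ _ => zero_le) hi
    · simp_all
  have hr : 0 < q.toReal := ENNReal.toReal_pos hq hq'
  rw [tsum_eq_sum (s := hfin.toFinset) fun i hi => by simp_all [ENNReal.zero_rpow_of_pos hr]]
  exact ENNReal.rpow_ne_top_of_nonneg (by positivity)
    (ENNReal.sum_ne_top.mpr fun i _ => ENNReal.rpow_ne_top_of_nonneg hr.le (hu i))

end Norms

theorem statement17_general (n : ℕ) (p q : ℝ≥0∞) (hp : 0 < p) (hq : 0 < q)
    (ξ0 : En n) (ε : ℝ)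
    (κ : En n → ℂ) (hκsm : ContDiff ℝ (⊤ : ℕ∞) κ) (hκc : HasCompactSupport κ)
    (hκ1 : ∀ ξ : En n, ‖ξ‖ < 2 * ε → κ ξ = 1)
    (hκ0 : ∀ ξ : En n, ‖ξ‖ < 2 * ε → ∀ μ : Zn n, μ ≠ 0 → κ (ξ - intVec μ) = 0)
    (θ : En n → ℂ) (hθsm : ContDiff ℝ (⊤ : ℕ∞) θ) (hθc : HasCompactSupport θ)
    (hθsupp : tsupport θ ⊆ {ξ : En n | ‖ξ - ξ0‖ < ε})
    (b : Zn n → ℂ) (hb : (Function.support b).Finite)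
    (f : En n → ℂ)
    (hf : f = fun x => (∑' ν : Zn n, b ν * e2πi (dotE (intVec ν) x)) * invFT θ x) :
    (∀ (μ : Zn n) (x : En n),
        mulOp (fun ξ => κ (ξ - ξ0 - intVec μ)) f x =
          b μ * e2πi (dotE (intVec μ) x) * invFT θ x) ∧
    LpNormE p volume (fun x : En n =>
        lqNorm q (fun μ : Zn n =>
          (‖mulOp (fun ξ => κ (ξ - ξ0 - intVec μ)) f x‖₊ : ℝ≥0∞)))
      = seqLq q b * eLpNorm (invFT θ) p volume := by
  have hθint : Integrable θ := hθsm.continuous.integrable_of_hasCompactSupport hθc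
  have hf' : f = invFT (latticeSum b θ) :=
    hf ▸ funext fun x => (invFT_latticeSum hb hθint x).symm
  have hloc : ∀ (μ : Zn n) (x : En n), mulOp (fun ξ => κ (ξ - ξ0 - intVec μ)) f x =
      b μ * e2πi (dotE (intVec μ) x) * invFT θ x := by
    intro μ x
    have hκμc : HasCompactSupport fun ξ => κ (ξ - ξ0 - intVec μ) := by
      simp_rw [sub_sub]
      exact hκc.comp_isClosedEmbedding (Homeomorph.subRight _).isClosedEmbedding
    have hκμsm : ContDiff ℝ (⊤ : ℕ∞) fun ξ => κ (ξ - ξ0 - intVec μ) := by fun_prop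
    rw [hf', mulOp_invFT_of_hasCompactSupport hκμc hκμsm (hasCompactSupport_latticeSum hb hθc)
      (contDiff_latticeSum hb hθsm)]
    simp only [window_mul_latticeSum hκ1 hκ0 hθsupp]
    rw [invFT_const_mul, invFT_comp_sub, dotE_comm, mul_assoc]
  refine ⟨hloc, ?_⟩
  have hpointwise : ∀ x : En n, lqNorm q (fun μ : Zn n =>
      (‖mulOp (fun ξ => κ (ξ - ξ0 - intVec μ)) f x‖₊ : ℝ≥0∞)) = seqLq q b * ‖invFT θ x‖₊ := by
    intro x
    simp_rw [hloc, nnnorm_mul, nnnorm_e2πi, mul_one, ENNReal.coe_mul]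
    exact lqNorm_mul_const hq.ne' _ _
  have hbq : seqLq q b ≠ ∞ :=
    lqNorm_ne_top hq.ne' (fun _ => ENNReal.coe_ne_top) (by simpa [Function.support] using hb)
  simp_rw [hpointwise]
  rw [LpNormE_const_mul hp.ne' _ hbq, LpNormE_nnnorm hp.ne']

/-- Frequency localization of `f` with `f̂(ξ) = Σ_ν b(ν) θ(ξ-ν)` (equivalently,
`f(x) = (Σ_ν b(ν) e^{2πi ν·x}) (𝓕⁻¹θ)(x)`), and the resulting Wiener amalgam
norm identity. -/
theorem statement17 (n : ℕ) (hn : 1 ≤ n) (p q : ℝ≥0∞) (hp : 0 < p) (hq : 0 < q)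
    (ξ0 : En n) (ε : ℝ) (hε : 0 < ε)
    (κ : En n → ℂ) (hκsm : ContDiff ℝ (⊤ : ℕ∞) κ) (hκc : HasCompactSupport κ)
    (hκ1 : ∀ ξ : En n, ‖ξ‖ < 2 * ε → κ ξ = 1)
    (hκ0 : ∀ ξ : En n, ‖ξ‖ < 2 * ε → ∀ μ : Zn n, μ ≠ 0 → κ (ξ - intVec μ) = 0)
    (θ : En n → ℂ) (hθsm : ContDiff ℝ (⊤ : ℕ∞) θ) (hθc : HasCompactSupport θ)
    (hθsupp : tsupport θ ⊆ {ξ : En n | ‖ξ - ξ0‖ < ε})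
    (b : Zn n → ℂ) (hb : (Function.support b).Finite)
    (f : En n → ℂ)
    (hf : f = fun x => (∑' ν : Zn n, b ν * e2πi (dotE (intVec ν) x)) * invFT θ x) :
    (∀ (μ : Zn n) (x : En n),
        mulOp (fun ξ => κ (ξ - ξ0 - intVec μ)) f x =
          b μ * e2πi (dotE (intVec μ) x) * invFT θ x) ∧
    LpNormE p volume (fun x : En n =>
        lqNorm q (fun μ : Zn n =>
          (‖mulOp (fun ξ => κ (ξ - ξ0 - intVec μ)) f x‖₊ : ℝ≥0∞)))
      = seqLq q b * eLpNorm (invFT θ) p volume :=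
  statement17_general n p q hp hq ξ0 ε κ hκsm hκc hκ1 hκ0 θ hθsm hθc hθsupp b hb f hf

end LatticeBump
end
end
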